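/- In the 2-player WLC game G_Σ with C_1 = {a_1,b_1,c_1}, C_2 = {a_2,b_2,c_2}, W = {(a_1,a_2),(a_1,b_2),(c_1,b_2),(c_1,c_2)}, player 1 has no optimal choice, b_1 is the unique surely losing choice, and after removing b_1 the choice b_2 is surely winning for player 2 in the reduced game; hence G_Σ is BCR-solvable but not IOC-solvable. -/

import Mathlib

open Classical

/-- An `n`-player win-lose coordination (WLC) game: a finite domain of choices,
nonempty pairwise disjoint choice sets `C i` for the players, and a winning
relation `W` consisting of choice profiles. -/
structure WLC (n : ℕ) where
  A : Type
  finA : Finite A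
  C : Fin n → Set A
  C_nonempty : ∀ i, (C i).Nonempty
  C_disjoint : ∀ i j, i ≠ j → Disjoint (C i) (C j)
  W : Set (Fin n → A)
  W_sub : ∀ σ ∈ W, ∀ i, σ i ∈ C i

namespace WLC

variable {n : ℕ}

/-- `σ` is a choice profile w.r.t. the choice sets `Cs`. -/
def IsProfileOn {A : Type} (Cs : Fin n → Set A) (σ : Fin n → A) : Prop :=
  ∀ i, σ i ∈ Cs i

/-- `c` is a surely winning choice of player `i` w.r.t. choice sets `Cs`
and winning relation `W`. -/
def SWinOn {A : Type} (Cs : Fin n → Set A) (W : Set (Fin n → A)) (i : Fin n) (c : A) : Prop :=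
  c ∈ Cs i ∧ ∀ σ, IsProfileOn Cs σ → σ i = c → σ ∈ W

/-- `c` is a surely losing choice of player `i` w.r.t. choice sets `Cs`
and winning relation `W`. -/
def SLoseOn {A : Type} (Cs : Fin n → Set A) (W : Set (Fin n → A)) (i : Fin n) (c : A) : Prop :=
  c ∈ Cs i ∧ ∀ σ, IsProfileOn Cs σ → σ i = c → σ ∉ W

def IsProfile (G : WLC n) (σ : Fin n → G.A) : Prop := IsProfileOn G.C σ

def SurelyWinning (G : WLC n) (i : Fin n) (c : G.A) : Prop := SWinOn G.C G.W i c

def SurelyLosing (G : WLC n) (i : Fin n) (c : G.A) : Prop := SLoseOn G.C G.W i c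

/-- The winning extension of the choice `c` of player `i`: the (sets of) tuples of
choices of the other players that complete `c` to a winning profile.  (Technically we
use full profiles whose `i`-th coordinate is irrelevant, replacing it by `c`.) -/
def winExtOn {A : Type} (Cs : Fin n → Set A) (W : Set (Fin n → A)) (i : Fin n) (c : A) :
    Set (Fin n → A) :=
  {σ | (∀ j, j ≠ i → σ j ∈ Cs j) ∧ Function.update σ i c ∈ W}

def winExt (G : WLC n) (i : Fin n) (c : G.A) : Set (Fin n → G.A) := winExtOn G.C G.W i c

end WLC

namespace WLC

variable {n : ℕ}

/-- The set of non-surely-losing choices of player `i`. -/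
def nonLosing (G : WLC n) (i : Fin n) : Set G.A :=
  {c ∈ G.C i | ¬ SurelyLosing G i c}

/-- `c` is an optimal choice of player `i`: it is at least as good as every choice of
`i`, i.e. its winning extension contains the winning extension of every choice of `i`. -/
def Optimal (G : WLC n) (i : Fin n) (c : G.A) : Prop :=
  c ∈ G.C i ∧ ∀ c' ∈ G.C i, winExt G i c' ⊆ winExt G i c

/-- The BCR-prescribed choices: in the game restricted to non-surely-losing choices,
play a surely winning choice when one exists, else any (non-surely-losing) choice. -/
noncomputable def BCRset (G : WLC n) (i : Fin n) : Set G.A :=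
  if ∃ c, SWinOn (nonLosing G) G.W i c then {c | SWinOn (nonLosing G) G.W i c}
  else nonLosing G i

/-- `G` is BCR-solvable: after removing all surely losing choices of every player,
some player has a surely winning choice, and the BCR-prescribed profiles are winning. -/
noncomputable def BCRSolvable (G : WLC n) : Prop :=
  (∃ i c, SWinOn (nonLosing G) G.W i c) ∧
  ∀ σ, (∀ i, σ i ∈ BCRset G i) → σ ∈ G.W

/-- The BIR⁺-prescribed choices: an optimal non-surely-losing choice when one exists,
else a non-surely-losing choice when one exists, else any choice. -/
noncomputable def BIRplusSet (G : WLC n) (i : Fin n) : Set G.A :=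
  if ∃ c, Optimal G i c ∧ ¬ SurelyLosing G i c then
    {c | Optimal G i c ∧ ¬ SurelyLosing G i c}
  else if ∃ c ∈ G.C i, ¬ SurelyLosing G i c then nonLosing G i
  else G.C i

/-- `G` is BIR⁺-solvable: every profile in which each player plays an optimal
non-surely-losing choice when possible (else merely a non-surely-losing choice)
is winning. -/
noncomputable def BIRplusSolvable (G : WLC n) : Prop :=
  ∀ σ, (∀ i, σ i ∈ BIRplusSet G i) → σ ∈ G.W

/-- `G` is IOC-solvable: every profile in which each player who has an optimal choice
plays one (players without optimal choices playing arbitrarily) is winning. -/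
def IOCSolvable (G : WLC n) : Prop :=
  ∀ σ, G.IsProfile σ →
    (∀ i, (∃ c, Optimal G i c) → Optimal G i (σ i)) → σ ∈ G.W

end WLC

open WLC

/-- The 2-player game `G_Σ`: choices `a₁ = (0,0)`, `b₁ = (0,1)`, `c₁ = (0,2)`,
`a₂ = (1,0)`, `b₂ = (1,1)`, `c₂ = (1,2)`;
`W = {(a₁,a₂), (a₁,b₂), (c₁,b₂), (c₁,c₂)}`. -/
def GSigma : WLC 2 where
  A := Fin 2 × Fin 3
  finA := inferInstance
  C := fun i => {a | a.1 = i}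
  C_nonempty := fun i => ⟨(i, 0), rfl⟩
  C_disjoint := fun i j h => Set.disjoint_left.mpr fun a ha hb => h (ha.symm.trans hb)
  W := {σ | (σ 0 = (0,0) ∧ σ 1 = (1,0)) ∨ (σ 0 = (0,0) ∧ σ 1 = (1,1)) ∨
            (σ 0 = (0,2) ∧ σ 1 = (1,1)) ∨ (σ 0 = (0,2) ∧ σ 1 = (1,2))}
  W_sub := by
    rintro σ (⟨h0, h1⟩ | ⟨h0, h1⟩ | ⟨h0, h1⟩ | ⟨h0, h1⟩) i <;> fin_cases i <;>
      simp [Set.mem_setOf_eq, h0, h1]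

/-!
Player 1's choices `a₁` and `c₁` win against different sets of responses (`{a₂, b₂}` and
`{b₂, c₂}`), so neither is optimal, while `b₁` wins against nothing. IOC therefore allows
player 1 to play `b₁`, and the game can be lost. BCR discards `b₁` first, after which `b₂` wins
against both remaining choices of player 1.
-/

namespace WLC

variable {n : ℕ} {G : WLC n} {i : Fin n} {c : G.A}

theorem not_surelyLosing_of_mem_W {σ : Fin n → G.A} (hσ : σ ∈ G.W) (i : Fin n) :
    ¬ SurelyLosing G i (σ i) :=
  fun h => h.2 σ (G.W_sub σ hσ) rfl hσ

theorem optimal_iff : Optimal G i c ↔ c ∈ G.C i ∧ ∀ σ ∈ G.W, Function.update σ i c ∈ G.W := by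
  refine and_congr_right fun _ => ⟨fun hsub σ hσ => ?_, fun hupd c' _ τ hτ => ?_⟩
  · have hext : σ ∈ winExt G i (σ i) :=
      ⟨fun j _ => G.W_sub σ hσ j, by rwa [Function.update_eq_self]⟩
    exact (hsub (σ i) (G.W_sub σ hσ i) hext).2
  · refine ⟨hτ.1, ?_⟩
    simpa only [Function.update_idem] using hupd _ hτ.2

theorem bcrSet_subset_nonLosing (G : WLC n) (i : Fin n) : BCRset G i ⊆ nonLosing G i := by
  unfold BCRset
  split_ifs
  · exact fun _ hc => hc.1
  · exact subset_rfl

theorem bcrSolvable_of_sWinOn_nonLosing (h : SWinOn (nonLosing G) G.W i c) : BCRSolvable G := by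
  refine ⟨⟨i, c, h⟩, fun σ hσ => ?_⟩
  have hi := hσ i
  rw [BCRset, if_pos ⟨c, h⟩] at hi
  exact hi.2 σ (fun j => bcrSet_subset_nonLosing G j (hσ j)) rfl

/-- IOC leaves a player without optimal choices free to play a surely losing one. -/
theorem not_iocSolvable_of_surelyLosing (hc : SurelyLosing G i c) (hopt : ¬ ∃ d, Optimal G i d) :
    ¬ IOCSolvable G := by
  have hd (j : Fin n) : ∃ d ∈ G.C j, (∃ d, Optimal G j d) → Optimal G j d := by
    by_cases h : ∃ d, Optimal G j d
    · obtain ⟨d, hd⟩ := h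
      exact ⟨d, hd.1, fun _ => hd⟩
    · obtain ⟨d, hd⟩ := G.C_nonempty j
      exact ⟨d, hd, fun h' => absurd h' h⟩
  choose d hdC hdopt using hd
  have hprofile : G.IsProfile (Function.update d i c) := by
    intro j
    rcases eq_or_ne j i with rfl | hj
    · simpa using hc.1
    · simpa [hj] using hdC j
  intro hioc
  refine hc.2 _ hprofile (Function.update_self ..) (hioc _ hprofile fun j => ?_)
  rcases eq_or_ne j i with rfl | hj
  · exact fun h => absurd h hopt
  · simpa [hj] using hdopt j

end WLC

namespace GSigma

theorem mem_W_iff (σ : Fin 2 → Fin 2 × Fin 3) :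
    σ ∈ GSigma.W ↔ (σ 0 = (0,0) ∧ σ 1 = (1,0)) ∨ (σ 0 = (0,0) ∧ σ 1 = (1,1)) ∨
      (σ 0 = (0,2) ∧ σ 1 = (1,1)) ∨ (σ 0 = (0,2) ∧ σ 1 = (1,2)) :=
  Iff.rfl

theorem a₁a₂_mem_W : ![(0,0), (1,0)] ∈ GSigma.W := (mem_W_iff _).2 (by simp)

theorem a₁b₂_mem_W : ![(0,0), (1,1)] ∈ GSigma.W := (mem_W_iff _).2 (by simp)

theorem c₁c₂_mem_W : ![(0,2), (1,2)] ∈ GSigma.W := (mem_W_iff _).2 (by simp)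

theorem update_zero_mem_W_iff (σ : Fin 2 → GSigma.A) (c : Fin 2 × Fin 3) :
    Function.update σ 0 c ∈ GSigma.W ↔ ![c, σ 1] ∈ GSigma.W :=
  Iff.rfl

/-- `a₂` wins only together with `a₁`, and `c₂` only together with `c₁`. -/
theorem not_exists_optimal_zero : ¬ ∃ c, Optimal GSigma 0 c := by
  rintro ⟨(c : Fin 2 × Fin 3), hopt⟩
  have ha₁ : c = (0,0) := by
    simpa [mem_W_iff] using (update_zero_mem_W_iff _ c).1 ((optimal_iff.1 hopt).2 _ a₁a₂_mem_W)
  have hc₁ : c = (0,2) := by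
    simpa [mem_W_iff] using (update_zero_mem_W_iff _ c).1 ((optimal_iff.1 hopt).2 _ c₁c₂_mem_W)
  exact absurd (ha₁.symm.trans hc₁) (by decide)

theorem surelyLosing_b₁ : SurelyLosing GSigma 0 (0,1) :=
  ⟨rfl, fun σ _ h0 hW => by simpa [h0] using (mem_W_iff σ).1 hW⟩

theorem exists_mem_W_apply_eq {i : Fin 2} {c : Fin 2 × Fin 3} (hc : c ∈ GSigma.C i)
    (hb₁ : c ≠ (0,1)) : ∃ σ ∈ GSigma.W, σ i = c := by
  obtain ⟨x, y⟩ := c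
  obtain rfl : x = i := hc
  fin_cases x <;> fin_cases y
  all_goals first
    | exact absurd rfl hb₁
    | exact ⟨_, a₁a₂_mem_W, rfl⟩
    | exact ⟨_, a₁b₂_mem_W, rfl⟩
    | exact ⟨_, c₁c₂_mem_W, rfl⟩

theorem eq_b₁_of_surelyLosing (i : Fin 2) (c : GSigma.A) (hc : c ∈ GSigma.C i)
    (hsl : SurelyLosing GSigma i c) : i = 0 ∧ c = (0,1) := by
  by_cases hb₁ : c = (0,1)
  · exact ⟨hc.symm.trans (congrArg Prod.fst hb₁), hb₁⟩
  · obtain ⟨σ, hσ, rfl⟩ := exists_mem_W_apply_eq hc hb₁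
    exact absurd hsl (not_surelyLosing_of_mem_W hσ i)

theorem eq_a₁_or_eq_c₁_of_mem_nonLosing {c : GSigma.A} (hc : c ∈ nonLosing GSigma 0) :
    c = (0,0) ∨ c = (0,2) := by
  obtain ⟨hc, hsl⟩ := hc
  obtain ⟨x, y⟩ := c
  obtain rfl : x = 0 := hc
  fin_cases y
  · exact .inl rfl
  · exact absurd surelyLosing_b₁ hsl
  · exact .inr rfl

theorem sWinOn_b₂ : SWinOn (nonLosing GSigma) GSigma.W 1 (1,1) := by
  refine ⟨⟨rfl, not_surelyLosing_of_mem_W a₁b₂_mem_W 1⟩, fun σ hσ h1 => (mem_W_iff σ).2 ?_⟩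
  rcases eq_a₁_or_eq_c₁_of_mem_nonLosing (hσ 0) with h0 | h0 <;> simp [h0, h1]

end GSigma

/-- In `G_Σ`, player `1` (index `0`) has no optimal choice, `b₁` is the
unique surely losing choice, and after removing `b₁` (i.e. in the restriction to
non-surely-losing choices) the choice `b₂` is surely winning for player `2`;
hence `G_Σ` is BCR-solvable but not IOC-solvable. -/
theorem GSigma_bcr_solvable_not_ioc_solvable :
    (¬ ∃ c, Optimal GSigma 0 c) ∧
    SurelyLosing GSigma 0 (0,1) ∧
    (∀ i c, c ∈ GSigma.C i → SurelyLosing GSigma i c → i = 0 ∧ c = (0,1)) ∧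
    SWinOn (nonLosing GSigma) GSigma.W 1 (1,1) ∧
    BCRSolvable GSigma ∧ ¬ IOCSolvable GSigma :=
  ⟨GSigma.not_exists_optimal_zero, GSigma.surelyLosing_b₁, GSigma.eq_b₁_of_surelyLosing,
    GSigma.sWinOn_b₂, bcrSolvable_of_sWinOn_nonLosing GSigma.sWinOn_b₂,
    not_iocSolvable_of_surelyLosing GSigma.surelyLosing_b₁ GSigma.not_exists_optimal_zero⟩
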